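/- arXiv:1704.06640 — 7 statements merged into one kernel-verified Lean document; each statement's English description precedes it below -/
import Mathlib

section
/- Let g_sr and g_rr be independent real random variables on a probability space, with g_sr ~ Gamma(m_sr, θ_sr) and g_rr ~ Gamma(m_rr, θ_rr) for integers m_sr, m_rr ≥ 1 and scales θ_sr, θ_rr > 0. Fix P_s, P_r > 0, C ∈ [0,1], r > 0 and set γ = 2^{2r} − 1. Then the S–R outage probability P[(P_s·g_sr + P_r·g_rr + 1)² − (P_r·g_rr·C)² < 2^{2r}·((P_r·g_rr + 1)² − (P_r·g_rr·C)²)] equals 1 − (1/(Γ(m_sr)·Γ(m_rr)·θ_rr^{m_rr})) · ∫_0^∞ x^{m_rr−1} · e^{−x/θ_rr} · Γ(m_sr, ((P_r·x + 1)/(P_s·θ_sr))·Ψ_γ(P_r·x·C/(P_r·x + 1))) dx. -/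
/-! For nonnegative gains, completing the square shows that an outage occurs exactly when
`g_sr < T g_rr` for the nonnegative threshold `T = outageThreshold P_s P_r C γ`. By independence the
probability of the complementary event is the integral, against the law of `g_rr`, of the Gamma
tail `P[g_sr ≥ T v] = Γ(m_sr, T v / θ_sr) / Γ(m_sr)`; writing that integral against the Gamma
density of `g_rr` gives the formula. -/

open MeasureTheory ProbabilityTheory Real

/-- `Psi γ x = √(1 + γ(1 - x²)) - 1`. -/
noncomputable def Psi (γ x : ℝ) : ℝ := Real.sqrt (1 + γ * (1 - x ^ 2)) - 1

/-- The Gamma(m, θ) law (integer shape `m ≥ 1`, scale `θ > 0`), given by its density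
`x^(m-1) e^(-x/θ) / ((m-1)! θ^m)` on `[0, ∞)`. -/
noncomputable def gammaLaw (m : ℕ) (θ : ℝ) : Measure ℝ :=
  volume.withDensity fun x =>
    ENNReal.ofReal
      (if 0 ≤ x then x ^ (m - 1) * Real.exp (-x / θ) / ((Nat.factorial (m - 1) : ℝ) * θ ^ m)
       else 0)

/-- Upper incomplete gamma function `Γ(a, y) = ∫_y^∞ t^(a-1) e^(-t) dt` for integer `a`. -/
noncomputable def uGamma (a : ℕ) (y : ℝ) : ℝ :=
  ∫ t in Set.Ioi y, t ^ (a - 1) * Real.exp (-t)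

open Set

lemma Real.Gamma_natCast_eq_factorial {m : ℕ} (hm : 1 ≤ m) : Gamma m = (m - 1).factorial := by
  obtain ⟨k, rfl⟩ := Nat.exists_eq_add_of_le' hm
  simpa using Gamma_nat_eq_factorial k

lemma integral_pow_mul_exp_neg_div_Ioi {m : ℕ} (hm : 1 ≤ m) {θ : ℝ} (hθ : 0 < θ) (t : ℝ) :
    ∫ x in Ioi t, x ^ (m - 1) * exp (-x / θ) = θ ^ m * uGamma m (t / θ) := by
  have hscale : ∀ x : ℝ, x ^ (m - 1) * exp (-x / θ)
      = θ ^ (m - 1) * ((θ⁻¹ * x) ^ (m - 1) * exp (-(θ⁻¹ * x))) := by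
    intro x
    rw [mul_pow, ← mul_assoc, ← mul_assoc, ← mul_pow, mul_inv_cancel₀ hθ.ne', one_pow, one_mul,
      neg_div, div_eq_inv_mul]
  simp_rw [hscale]
  rw [integral_const_mul, integral_comp_mul_left_Ioi (fun y ↦ y ^ (m - 1) * exp (-y)) t
    (inv_pos.mpr hθ), smul_eq_mul, inv_inv, ← mul_assoc, ← pow_succ, Nat.sub_add_cancel hm,
    inv_mul_eq_div, uGamma]

lemma integral_gammaLaw {m : ℕ} (hm : 1 ≤ m) {θ : ℝ} (hθ : 0 < θ) (f : ℝ → ℝ) :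
    ∫ x, f x ∂gammaLaw m θ
      = (Gamma m * θ ^ m)⁻¹ * ∫ x in Ici 0, x ^ (m - 1) * exp (-x / θ) * f x := by
  rw [gammaLaw, integral_withDensity_eq_integral_toReal_smul
    (Measurable.ite measurableSet_Ici (by fun_prop) measurable_const).ennreal_ofReal
    (ae_of_all _ fun _ ↦ ENNReal.ofReal_lt_top), ← integral_const_mul,
    ← integral_indicator measurableSet_Ici]
  congr 1 with x
  by_cases hx : 0 ≤ x
  · rw [indicator_of_mem (mem_Ici.mpr hx), if_pos hx, Gamma_natCast_eq_factorial hm,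
      ENNReal.toReal_ofReal (by positivity), smul_eq_mul]
    ring
  · simp [hx]

lemma ae_nonneg_gammaLaw (m : ℕ) (θ : ℝ) : ∀ᵐ x ∂gammaLaw m θ, 0 ≤ x := by
  rw [gammaLaw, ae_withDensity_iff
    (Measurable.ite measurableSet_Ici (by fun_prop) measurable_const).ennreal_ofReal]
  filter_upwards with x hx
  by_contra hneg
  simp [hneg] at hx

lemma gammaLaw_real_Ici {m : ℕ} (hm : 1 ≤ m) {θ : ℝ} (hθ : 0 < θ) {t : ℝ} (ht : 0 ≤ t) :
    (gammaLaw m θ).real (Ici t) = uGamma m (t / θ) / Gamma m := by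
  have hindicator : ∀ x, x ^ (m - 1) * exp (-x / θ) * (Ici t).indicator 1 x
      = (Ici t).indicator (fun x ↦ x ^ (m - 1) * exp (-x / θ)) x := by
    intro x
    by_cases hx : x ∈ Ici t <;> simp [hx]
  have hΓ : 0 < Gamma m := Gamma_pos_of_pos (by exact_mod_cast hm)
  rw [← integral_indicator_one measurableSet_Ici, integral_gammaLaw hm hθ]
  simp_rw [hindicator]
  rw [setIntegral_indicator measurableSet_Ici, Ici_inter_Ici, sup_eq_right.mpr ht,
    integral_Ici_eq_integral_Ioi, integral_pow_mul_exp_neg_div_Ioi hm hθ]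
  field_simp

lemma mul_Psi_div {a : ℝ} (ha : 0 < a) (γ c : ℝ) :
    a * Psi γ (c / a) = √((1 + γ) * a ^ 2 - γ * c ^ 2) - a := by
  have h : (1 + γ) * a ^ 2 - γ * c ^ 2 = a ^ 2 * (1 + γ * (1 - (c / a) ^ 2)) := by
    field_simp
    ring
  rw [Psi, h, sqrt_mul (sq_nonneg a), sqrt_sq ha.le]
  ring

lemma sq_sub_sq_lt_iff_lt_mul_Psi {s a c γ : ℝ} (ha : 0 < a) (hs : 0 ≤ s) :
    (s + a) ^ 2 - c ^ 2 < (1 + γ) * (a ^ 2 - c ^ 2) ↔ s < a * Psi γ (c / a) := by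
  rw [mul_Psi_div ha, lt_sub_iff_add_lt, lt_sqrt (by positivity)]
  constructor <;> intro h <;> linarith

lemma Psi_nonneg {γ x : ℝ} (hγ : 0 ≤ γ) (hx : x ^ 2 ≤ 1) : 0 ≤ Psi γ x := by
  rw [Psi, sub_nonneg, one_le_sqrt]
  nlinarith

noncomputable def outageThreshold (P_s P_r C γ v : ℝ) : ℝ :=
  (P_r * v + 1) * Psi γ (P_r * v * C / (P_r * v + 1)) / P_s

lemma measurable_outageThreshold (P_s P_r C γ : ℝ) :
    Measurable (outageThreshold P_s P_r C γ) := by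
  unfold outageThreshold Psi
  fun_prop

lemma outageThreshold_nonneg {P_s P_r C γ v : ℝ} (hP_s : 0 ≤ P_s) (hP_r : 0 ≤ P_r)
    (hC : C ∈ Icc (0 : ℝ) 1) (hγ : 0 ≤ γ) (hv : 0 ≤ v) : 0 ≤ outageThreshold P_s P_r C γ v := by
  obtain ⟨hC0, hC1⟩ := hC
  have hfrac : P_r * v * C / (P_r * v + 1) ∈ Icc (0 : ℝ) 1 :=
    ⟨by positivity, (div_le_one (by positivity)).mpr (by nlinarith [mul_nonneg hP_r hv])⟩
  have := Psi_nonneg hγ (pow_le_one₀ hfrac.1 hfrac.2 (n := 2))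
  unfold outageThreshold
  positivity

lemma outageThreshold_div (P_s P_r C γ v θ : ℝ) :
    outageThreshold P_s P_r C γ v / θ
      = (P_r * v + 1) / (P_s * θ) * Psi γ (P_r * v * C / (P_r * v + 1)) := by
  rw [outageThreshold]
  ring

lemma lt_outageThreshold_iff {P_s P_r C γ u v : ℝ} (hP_s : 0 < P_s) (hP_r : 0 ≤ P_r)
    (hu : 0 ≤ u) (hv : 0 ≤ v) :
    (P_s * u + P_r * v + 1) ^ 2 - (P_r * v * C) ^ 2
        < (1 + γ) * ((P_r * v + 1) ^ 2 - (P_r * v * C) ^ 2)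
      ↔ u < outageThreshold P_s P_r C γ v := by
  rw [add_assoc, sq_sub_sq_lt_iff_lt_mul_Psi (by positivity) (by positivity), outageThreshold,
    lt_div_iff₀ hP_s, mul_comm u]

lemma ProbabilityTheory.IndepFun.measureReal_le_eq_integral {Ω β : Type*} [MeasurableSpace Ω]
    [MeasurableSpace β] {μ : Measure Ω} [IsFiniteMeasure μ] {X : Ω → ℝ} {Y : Ω → β}
    (hX : Measurable X) (hY : Measurable Y) (hXY : IndepFun X Y μ) {T : β → ℝ}
    (hT : Measurable T) :
    μ.real {ω | T (Y ω) ≤ X ω} = ∫ y, (μ.map X).real (Ici (T y)) ∂μ.map Y := by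
  have hS : MeasurableSet {p : β × ℝ | T p.1 ≤ p.2} :=
    measurableSet_le (hT.comp measurable_fst) measurable_snd
  have hprod : μ.map (fun ω ↦ (Y ω, X ω)) = (μ.map Y).prod (μ.map X) :=
    (indepFun_iff_map_prod_eq_prod_map_map hY.aemeasurable hX.aemeasurable).mp hXY.symm
  change (μ ((fun ω ↦ (Y ω, X ω)) ⁻¹' {p | T p.1 ≤ p.2})).toReal = _
  rw [← Measure.map_apply (hY.prodMk hX) hS, hprod, Measure.prod_apply hS]
  exact (integral_toReal (measurable_measure_prodMk_left hS).aemeasurable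
    (ae_of_all _ fun _ ↦ measure_lt_top _ _)).symm

lemma ProbabilityTheory.IndepFun.measureReal_le_eq_integral_uGamma {Ω β : Type*}
    [MeasurableSpace Ω] [MeasurableSpace β] {μ : Measure Ω} [IsFiniteMeasure μ]
    {X : Ω → ℝ} {Y : Ω → β} (hX : Measurable X) (hY : Measurable Y) (hXY : IndepFun X Y μ)
    {m : ℕ} (hm : 1 ≤ m) {θ : ℝ} (hθ : 0 < θ) (hlaw : μ.map X = gammaLaw m θ)
    {T : β → ℝ} (hT : Measurable T) (hT_nonneg : ∀ᵐ y ∂μ.map Y, 0 ≤ T y) :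
    μ.real {ω | T (Y ω) ≤ X ω} = ∫ y, uGamma m (T y / θ) / Gamma m ∂μ.map Y := by
  rw [hXY.measureReal_le_eq_integral hX hY hT, hlaw]
  refine integral_congr_ae ?_
  filter_upwards [hT_nonneg] with y hy
  exact gammaLaw_real_Ici hm hθ hy


theorem stmt_0
    {Ω : Type*} [MeasurableSpace Ω] (μ : Measure Ω) [IsProbabilityMeasure μ]
    (g_sr g_rr : Ω → ℝ) (hg_sr : Measurable g_sr) (hg_rr : Measurable g_rr)
    (hindep : IndepFun g_sr g_rr μ)
    (m_sr m_rr : ℕ) (hm_sr : 1 ≤ m_sr) (hm_rr : 1 ≤ m_rr)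
    (θ_sr θ_rr : ℝ) (hθ_sr : 0 < θ_sr) (hθ_rr : 0 < θ_rr)
    (hlaw_sr : μ.map g_sr = gammaLaw m_sr θ_sr)
    (hlaw_rr : μ.map g_rr = gammaLaw m_rr θ_rr)
    (P_s P_r : ℝ) (hP_s : 0 < P_s) (hP_r : 0 < P_r)
    (C : ℝ) (hC : C ∈ Set.Icc (0 : ℝ) 1)
    (r : ℝ) (hr : 0 < r) :
    (μ {ω | (P_s * g_sr ω + P_r * g_rr ω + 1) ^ 2 - (P_r * g_rr ω * C) ^ 2
          < (2 : ℝ) ^ (2 * r) * ((P_r * g_rr ω + 1) ^ 2 - (P_r * g_rr ω * C) ^ 2)}).toReal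
      = 1 - (1 / (Real.Gamma (m_sr : ℝ) * Real.Gamma (m_rr : ℝ) * θ_rr ^ m_rr)) *
          ∫ x in Set.Ioi (0 : ℝ),
            x ^ (m_rr - 1) * Real.exp (-x / θ_rr) *
              uGamma m_sr
                (((P_r * x + 1) / (P_s * θ_sr)) *
                  Psi ((2 : ℝ) ^ (2 * r) - 1) (P_r * x * C / (P_r * x + 1))) := by
  set γ : ℝ := (2 : ℝ) ^ (2 * r) - 1
  have hγ : 0 ≤ γ := sub_nonneg.mpr (one_le_rpow one_le_two (by positivity))
  have hT := measurable_outageThreshold P_s P_r C γ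
  have hnonneg_sr : ∀ᵐ ω ∂μ, 0 ≤ g_sr ω :=
    ae_of_ae_map hg_sr.aemeasurable (hlaw_sr ▸ ae_nonneg_gammaLaw m_sr θ_sr)
  have hnonneg_rr : ∀ᵐ ω ∂μ, 0 ≤ g_rr ω :=
    ae_of_ae_map hg_rr.aemeasurable (hlaw_rr ▸ ae_nonneg_gammaLaw m_rr θ_rr)
  have houtage : μ.real {ω | (P_s * g_sr ω + P_r * g_rr ω + 1) ^ 2 - (P_r * g_rr ω * C) ^ 2
        < (2 : ℝ) ^ (2 * r) * ((P_r * g_rr ω + 1) ^ 2 - (P_r * g_rr ω * C) ^ 2)}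
      = μ.real {ω | outageThreshold P_s P_r C γ (g_rr ω) ≤ g_sr ω}ᶜ := by
    refine measureReal_congr (Filter.eventuallyEq_set.mpr ?_)
    filter_upwards [hnonneg_sr, hnonneg_rr] with ω hu hv
    simp [show (2 : ℝ) ^ (2 * r) = 1 + γ by ring, lt_outageThreshold_iff hP_s hP_r.le hu hv]
  have hno_outage := hindep.measureReal_le_eq_integral_uGamma hg_sr hg_rr hm_sr hθ_sr hlaw_sr hT
    (hlaw_rr ▸ (ae_nonneg_gammaLaw m_rr θ_rr).mono fun v hv ↦
      outageThreshold_nonneg hP_s.le hP_r.le hC hγ hv)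
  change μ.real _ = _
  rw [houtage, measureReal_compl (measurableSet_le (by exact hT.comp hg_rr) hg_sr), probReal_univ,
    hno_outage, hlaw_rr, integral_gammaLaw hm_rr hθ_rr, integral_Ici_eq_integral_Ioi]
  simp_rw [outageThreshold_div, ← mul_div_assoc, integral_div]
  ring
end

section
/- Fix P_s, P_r, π_sr > 0, γ ≥ 0 and C ∈ [0,1]. Then the function g ↦ exp( − ((P_r·g + 1)/(P_s·π_sr)) · Ψ_γ(P_r·g·C/(P_r·g + 1)) ) is convex on [0,∞). Equivalently, with A = P_r²(1 + γ(1 − C²))/(P_s²π_sr²), B = 2(1+γ)P_r/(P_s²π_sr²), C' = (1+γ)/(P_s²π_sr²), D = P_r/(P_s·π_sr), F = 1/(P_s·π_sr), the function g ↦ exp(−(√(A g² + B g + C') − (D g + F))) is convex on [0,∞); this holds because B² − 4AC' ≥ 0, making g ↦ √(A g² + B g + C') − (D g + F) concave on [0,∞). -/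
open Real

/-- Square root of a nonneg-coefficient quadratic with nonnegative discriminant is
concave on `[0, ∞)`. -/
lemma sqrt_quad_concave (A B C' : ℝ) (hA : 0 ≤ A) (hB : 0 ≤ B) (hC' : 0 ≤ C')
    (hdisc : 4 * A * C' ≤ B ^ 2) :
    ConcaveOn ℝ (Set.Ici (0 : ℝ)) (fun g => Real.sqrt (A * g ^ 2 + B * g + C')) := by
  refine ⟨convex_Ici 0, fun x hx y hy a b ha hb hab => ?_⟩
  simp only [smul_eq_mul] at *
  have hx0 : (0:ℝ) ≤ x := hx
  have hy0 : (0:ℝ) ≤ y := hy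
  have hqx : 0 ≤ A * x ^ 2 + B * x + C' := by positivity
  have hqy : 0 ≤ A * y ^ 2 + B * y + C' := by positivity
  set sx := Real.sqrt (A * x ^ 2 + B * x + C') with hsx
  set sy := Real.sqrt (A * y ^ 2 + B * y + C') with hsy
  have hsx0 : 0 ≤ sx := Real.sqrt_nonneg _
  have hsy0 : 0 ≤ sy := Real.sqrt_nonneg _
  have hsx2 : sx ^ 2 = A * x ^ 2 + B * x + C' := Real.sq_sqrt hqx
  have hsy2 : sy ^ 2 = A * y ^ 2 + B * y + C' := Real.sq_sqrt hqy
  have hM : 0 ≤ (2 * A * x * y + B * (x + y) + 2 * C') / 2 := by positivity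
  have h1 : (sx * sy) ^ 2 ≤ ((2 * A * x * y + B * (x + y) + 2 * C') / 2) ^ 2 := by
    have h0 : (sx * sy) ^ 2 = (A * x ^ 2 + B * x + C') * (A * y ^ 2 + B * y + C') := by
      rw [mul_pow, hsx2, hsy2]
    rw [h0]
    nlinarith [sq_nonneg (x - y), mul_nonneg (mul_nonneg hA hC') (sq_nonneg (x - y)),
      mul_nonneg (mul_nonneg hx0 hy0) (sq_nonneg (x - y))]
  have hkey : sx * sy ≤ (2 * A * x * y + B * (x + y) + 2 * C') / 2 := by
    have h2 := Real.sqrt_le_sqrt h1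
    rwa [Real.sqrt_sq (mul_nonneg hsx0 hsy0), Real.sqrt_sq hM] at h2
  have hq : (a * sx + b * sy) ^ 2 ≤ A * (a * x + b * y) ^ 2 + B * (a * x + b * y) + C' := by
    have hb1 : b = 1 - a := by linarith
    subst hb1
    nlinarith [mul_le_mul_of_nonneg_left hkey (mul_nonneg ha hb), hsx2, hsy2,
      mul_nonneg ha hb]
  calc a * sx + b * sy = Real.sqrt ((a * sx + b * sy) ^ 2) := by
        rw [Real.sqrt_sq (by positivity)]
      _ ≤ Real.sqrt (A * (a * x + b * y) ^ 2 + B * (a * x + b * y) + C') :=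
        Real.sqrt_le_sqrt hq

/-- An affine function is convex on `[0, ∞)`. -/
lemma affine_convexOn (D F : ℝ) :
    ConvexOn ℝ (Set.Ici (0 : ℝ)) (fun g : ℝ => D * g + F) := by
  refine ⟨convex_Ici 0, fun x _ y _ a b ha hb hab => ?_⟩
  simp only [smul_eq_mul]
  have h : a * (D * x + F) + b * (D * y + F) = D * (a * x + b * y) + (a + b) * F := by ring
  rw [h, hab, one_mul]

/-- exp of the negation of a concave function is convex. -/
lemma exp_neg_concave_convex {h : ℝ → ℝ} (hh : ConcaveOn ℝ (Set.Ici (0 : ℝ)) h) :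
    ConvexOn ℝ (Set.Ici (0 : ℝ)) (fun g => Real.exp (-(h g))) := by
  refine ⟨convex_Ici 0, fun x hx y hy a b ha hb hab => ?_⟩
  simp only [smul_eq_mul]
  have h1 : a * h x + b * h y ≤ h (a * x + b * y) := by
    simpa using hh.2 hx hy ha hb hab
  calc Real.exp (-(h (a * x + b * y))) ≤ Real.exp (a * (-(h x)) + b * (-(h y))) := by
        apply Real.exp_le_exp.mpr; linarith
    _ ≤ a * Real.exp (-(h x)) + b * Real.exp (-(h y)) := by
        simpa using convexOn_exp.2 (Set.mem_univ (-(h x))) (Set.mem_univ (-(h y))) ha hb hab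

theorem stmt_2
    (P_s P_r π_sr : ℝ) (hP_s : 0 < P_s) (hP_r : 0 < P_r) (hπ_sr : 0 < π_sr)
    (γ : ℝ) (hγ : 0 ≤ γ) (C : ℝ) (hC : C ∈ Set.Icc (0 : ℝ) 1)
    (A B C' D F : ℝ)
    (hA : A = P_r ^ 2 * (1 + γ * (1 - C ^ 2)) / (P_s ^ 2 * π_sr ^ 2))
    (hB : B = 2 * (1 + γ) * P_r / (P_s ^ 2 * π_sr ^ 2))
    (hC' : C' = (1 + γ) / (P_s ^ 2 * π_sr ^ 2))
    (hD : D = P_r / (P_s * π_sr))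
    (hF : F = 1 / (P_s * π_sr)) :
    ConvexOn ℝ (Set.Ici (0 : ℝ))
      (fun g => Real.exp (-(((P_r * g + 1) / (P_s * π_sr)) *
        Psi γ (P_r * g * C / (P_r * g + 1))))) ∧
    ConvexOn ℝ (Set.Ici (0 : ℝ))
      (fun g => Real.exp (-(Real.sqrt (A * g ^ 2 + B * g + C') - (D * g + F)))) ∧
    B ^ 2 - 4 * A * C' ≥ 0 ∧
    ConcaveOn ℝ (Set.Ici (0 : ℝ))
      (fun g => Real.sqrt (A * g ^ 2 + B * g + C') - (D * g + F)) := by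
  obtain ⟨hC0, hC1⟩ := hC
  have hPs : P_s ≠ 0 := hP_s.ne'
  have hπ : π_sr ≠ 0 := hπ_sr.ne'
  have h1γ : (0:ℝ) ≤ 1 + γ := by linarith
  have hC2 : 0 ≤ 1 - C ^ 2 := by nlinarith
  have hA0 : 0 ≤ A := by
    rw [hA]
    apply div_nonneg _ (by positivity)
    apply mul_nonneg (by positivity)
    nlinarith
  have hB0 : 0 ≤ B := by
    rw [hB]
    apply div_nonneg _ (by positivity)
    apply mul_nonneg (by positivity) hP_r.le
  have hC'0 : 0 ≤ C' := by
    rw [hC']; exact div_nonneg h1γ (by positivity)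
  have hdiff : B ^ 2 - 4 * A * C'
      = 4 * P_r ^ 2 * (1 + γ) * γ * C ^ 2 / (P_s ^ 2 * π_sr ^ 2) ^ 2 := by
    rw [hA, hB, hC']; field_simp; ring
  have hdiffpos : 0 ≤ B ^ 2 - 4 * A * C' := by
    rw [hdiff]
    exact div_nonneg
      (mul_nonneg (mul_nonneg (mul_nonneg (by positivity) h1γ) hγ) (sq_nonneg C))
      (by positivity)
  have hdisc : 4 * A * C' ≤ B ^ 2 := by linarith
  have hconc : ConcaveOn ℝ (Set.Ici (0 : ℝ))
      (fun g => Real.sqrt (A * g ^ 2 + B * g + C') - (D * g + F)) :=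
    (sqrt_quad_concave A B C' hA0 hB0 hC'0 hdisc).sub (affine_convexOn D F)
  have hconv2 : ConvexOn ℝ (Set.Ici (0 : ℝ))
      (fun g => Real.exp (-(Real.sqrt (A * g ^ 2 + B * g + C') - (D * g + F)))) :=
    exp_neg_concave_convex hconc
  have heq : Set.EqOn
      (fun g => Real.exp (-(Real.sqrt (A * g ^ 2 + B * g + C') - (D * g + F))))
      (fun g => Real.exp (-(((P_r * g + 1) / (P_s * π_sr)) *
        Psi γ (P_r * g * C / (P_r * g + 1))))) (Set.Ici (0 : ℝ)) := by
    intro g hg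
    have hg0 : (0:ℝ) ≤ g := hg
    have ht : 0 < P_r * g + 1 := by positivity
    have htne : P_r * g + 1 ≠ 0 := ht.ne'
    have key : A * g ^ 2 + B * g + C'
        = ((P_r * g + 1) / (P_s * π_sr)) ^ 2
          * (1 + γ * (1 - (P_r * g * C / (P_r * g + 1)) ^ 2)) := by
      rw [hA, hB, hC']; field_simp; ring
    simp only [Psi]
    congr 1
    rw [key, Real.sqrt_mul (by positivity), Real.sqrt_sq (by positivity)]
    have hDF : D * g + F = (P_r * g + 1) / (P_s * π_sr) := by
      rw [hD, hF]; field_simp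
    rw [hDF]; ring
  exact ⟨hconv2.congr heq, hconv2, hdiffpos, hconc⟩
end

section
/- Fix P_s, P_r, π_rd, π_sd > 0, r > 0 and set γ = 2^{2r} − 1. Then the left limit as C → 1⁻ of the function C ↦ 1 − exp(−Ψ_γ(C)/(P_r·π_rd·(1 − C²))) / ( P_s·π_sd·Ψ_γ(C)/(P_r·π_rd·(1 − C²)) + 1 ), defined for C ∈ [0,1), equals 1 − exp(−γ/(2·P_r·π_rd)) / ( γ·P_s·π_sd/(2·P_r·π_rd) + 1 ). -/
open Real Filter Topology

theorem stmt_6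
    (P_s P_r π_rd π_sd : ℝ) (hP_s : 0 < P_s) (hP_r : 0 < P_r)
    (hπ_rd : 0 < π_rd) (hπ_sd : 0 < π_sd)
    (r : ℝ) (hr : 0 < r) (γ : ℝ) (hγ : γ = (2 : ℝ) ^ (2 * r) - 1) :
    Tendsto
      (fun C : ℝ =>
        1 - Real.exp (-(Psi γ C / (P_r * π_rd * (1 - C ^ 2)))) /
          (P_s * π_sd * Psi γ C / (P_r * π_rd * (1 - C ^ 2)) + 1))
      (nhdsWithin 1 (Set.Ico (0 : ℝ) 1))
      (nhds (1 - Real.exp (-(γ / (2 * P_r * π_rd))) /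
        (γ * P_s * π_sd / (2 * P_r * π_rd) + 1))) := by
  have hγpos : 0 < γ := by
    have h2 : (1 : ℝ) < (2 : ℝ) ^ (2 * r) := by
      rw [show ((1:ℝ)) = (2:ℝ) ^ (0:ℝ) by simp]
      exact Real.rpow_lt_rpow_left_iff one_lt_two |>.mpr (by linarith)
    rw [hγ]; linarith
  set L := nhdsWithin (1:ℝ) (Set.Ico (0 : ℝ) 1) with hL
  -- key limit
  have hf : Tendsto (fun C : ℝ => Psi γ C / (1 - C ^ 2)) L (𝓝 (γ / 2)) := by
    have hg : Tendsto (fun C : ℝ => γ / (Real.sqrt (1 + γ * (1 - C ^ 2)) + 1)) L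
        (𝓝 (γ / 2)) := by
      have hc : ContinuousAt (fun C : ℝ => γ / (Real.sqrt (1 + γ * (1 - C ^ 2)) + 1)) 1 := by
        apply ContinuousAt.div continuousAt_const
        · exact ((Real.continuous_sqrt.comp (by continuity)).continuousAt).add continuousAt_const
        · simp
      have := (hc.continuousWithinAt (s := Set.Ico (0:ℝ) 1)).tendsto
      convert this using 2
      norm_num
    refine hg.congr' ?_
    filter_upwards [self_mem_nhdsWithin] with C hC
    obtain ⟨h0, h1⟩ := hC
    have hC2 : C ^ 2 < 1 := by nlinarith
    have ha : (0:ℝ) < 1 + γ * (1 - C ^ 2) := by nlinarith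
    have hs : Real.sqrt (1 + γ * (1 - C ^ 2)) ^ 2 = 1 + γ * (1 - C ^ 2) :=
      Real.sq_sqrt ha.le
    have hspos : 0 < Real.sqrt (1 + γ * (1 - C ^ 2)) + 1 :=
      by positivity
    have hne1 : (1 : ℝ) - C ^ 2 ≠ 0 := by nlinarith
    rw [Psi]
    rw [div_eq_div_iff hspos.ne' hne1]
    nlinarith [hs]
  have h1 : Tendsto (fun C : ℝ => Psi γ C / (P_r * π_rd * (1 - C ^ 2))) L
      (𝓝 (γ / (2 * P_r * π_rd))) := by
    have := hf.div_const (P_r * π_rd)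
    have heq : γ / 2 / (P_r * π_rd) = γ / (2 * P_r * π_rd) := by ring
    rw [heq] at this
    exact this.congr fun C => by rw [div_div, mul_comm]
  have h2 : Tendsto (fun C : ℝ => P_s * π_sd * Psi γ C / (P_r * π_rd * (1 - C ^ 2))) L
      (𝓝 (γ * P_s * π_sd / (2 * P_r * π_rd))) := by
    have := (hf.const_mul (P_s * π_sd)).div_const (P_r * π_rd)
    have heq : P_s * π_sd * (γ / 2) / (P_r * π_rd) = γ * P_s * π_sd / (2 * P_r * π_rd) := by ring
    rw [heq] at this
    exact this.congr fun C => by rw [mul_div_assoc, div_div, mul_comm (1 - C^2), ← mul_div_assoc]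
  have hne : γ * P_s * π_sd / (2 * P_r * π_rd) + 1 ≠ 0 := by positivity
  exact tendsto_const_nhds.sub (((Real.continuous_exp.tendsto _).comp h1.neg).div (h2.add tendsto_const_nhds) hne)
end

section
/- Let g_sr, g_rr, g_rd, g_sd be mutually independent exponential random variables with means π_sr, π_rr, π_rd, π_sd > 0, respectively. Fix P_s, P_r > 0, r > 0 and set η = 2^r − 1. Then the end-to-end outage probability under proper Gaussian signaling satisfies P[ {(P_s·g_sr + P_r·g_rr + 1)² < 2^{2r}·(P_r·g_rr + 1)²} ∪ {(P_r·g_rd + P_s·g_sd + 1)² < 2^{2r}·(P_s·g_sd + 1)²} ] = 1 − P_s·P_r·π_sr·π_rd · e^{−η·(1/(P_s·π_sr) + 1/(P_r·π_rd))} / ( (P_s·π_sr + P_r·π_rr·η) · (P_r·π_rd + P_s·π_sd·η) ). -/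
open MeasureTheory ProbabilityTheory Real

/-- The exponential law with mean `mean`, given by its density `(1/mean) e^(-x/mean)` on `[0, ∞)`. -/
noncomputable def expLaw (mean : ℝ) : Measure ℝ :=
  volume.withDensity fun x =>
    ENNReal.ofReal (if 0 ≤ x then (1 / mean) * Real.exp (-x / mean) else 0)

/-!
Taking square roots, a hop is not in outage exactly when its SINR `P x / (Q y + 1)` reaches
`η = 2 ^ r - 1`, so the complement of the outage event is the intersection of two independent
hop-success events. For independent exponentials `X`, `Y` with means `a`, `b`, conditioning on `Y`
gives `P(η (Q Y + 1) ≤ P X) = E[exp (-η (Q Y + 1) / (P a))]`, and the Laplace transform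
`E[exp (-s Y)] = 1 / (1 + s b)` turns this into `P a exp (-η / (P a)) / (P a + Q b η)`.
-/

open Set

lemma lintegral_ofReal_exp_mul_Ici {a : ℝ} (ha : a < 0) (c : ℝ) :
    ∫⁻ x in Ici c, ENNReal.ofReal (exp (a * x)) = ENNReal.ofReal (-exp (a * c) / a) := by
  have hint : IntegrableOn (fun x => exp (a * x)) (Ici c) :=
    (integrableOn_Ici_iff_integrableOn_Ioi).2 <| by
      simpa [neg_mul] using exp_neg_integrableOn_Ioi c (neg_pos.2 ha)
  rw [← ofReal_integral_eq_lintegral_ofReal hint (ae_of_all _ fun _ => (exp_pos _).le),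
    integral_Ici_eq_integral_Ioi, integral_exp_mul_Ioi ha]

lemma measurable_expLaw_density (m : ℝ) :
    Measurable fun x : ℝ => ENNReal.ofReal (if 0 ≤ x then (1 / m) * exp (-x / m) else 0) :=
  (Measurable.ite measurableSet_Ici (by fun_prop) measurable_const).ennreal_ofReal

instance (m : ℝ) : SFinite (expLaw m) := by
  unfold expLaw
  infer_instance

lemma expLaw_Iio_zero (m : ℝ) : expLaw m (Iio 0) = 0 := by
  rw [expLaw, withDensity_apply _ measurableSet_Iio]
  exact setLIntegral_eq_zero measurableSet_Iio fun x (hx : x < 0) => by simp [not_le.2 hx]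

lemma ae_nonneg_of_map_eq_expLaw {Ω : Type*} [MeasurableSpace Ω] {μ : Measure Ω} {X : Ω → ℝ}
    {m : ℝ} (hX : Measurable X) (hlaw : μ.map X = expLaw m) : ∀ᵐ ω ∂μ, 0 ≤ X ω := by
  have : μ (X ⁻¹' Iio 0) = 0 := by
    rw [← Measure.map_apply hX measurableSet_Iio, hlaw, expLaw_Iio_zero]
  rw [ae_iff]
  simp only [not_le]
  exact this

lemma expLaw_Ici {m c : ℝ} (hm : 0 < m) (hc : 0 ≤ c) :
    expLaw m (Ici c) = ENNReal.ofReal (exp (-(c / m))) := by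
  rw [expLaw, withDensity_apply _ measurableSet_Ici,
    setLIntegral_congr_fun measurableSet_Ici (g := fun x =>
      ENNReal.ofReal (1 / m) * ENNReal.ofReal (exp (-m⁻¹ * x)))
      fun x (hx : c ≤ x) => by
        beta_reduce
        rw [if_pos (hc.trans hx), ENNReal.ofReal_mul (by positivity), neg_div, neg_mul,
          inv_mul_eq_div],
    lintegral_const_mul _ (by fun_prop),
    lintegral_ofReal_exp_mul_Ici (neg_lt_zero.2 (inv_pos.2 hm)), ← ENNReal.ofReal_mul (by positivity)]
  congr 1
  field_simp

lemma lintegral_exp_neg_mul_expLaw {m s : ℝ} (hm : 0 < m) (hs : 0 ≤ s) :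
    ∫⁻ y, ENNReal.ofReal (exp (-(s * y))) ∂expLaw m = ENNReal.ofReal (1 / (1 + s * m)) := by
  have hrate : -(1 / m + s) < 0 := neg_lt_zero.2 (by positivity)
  rw [expLaw, lintegral_withDensity_eq_lintegral_mul _ (measurable_expLaw_density m)
    (by fun_prop)]
  have hind : ∀ y, ((fun x : ℝ => ENNReal.ofReal
        (if 0 ≤ x then (1 / m) * exp (-x / m) else 0)) * fun y => ENNReal.ofReal (exp (-(s * y)))) y
      = (Ici 0).indicator
          (fun y => ENNReal.ofReal (1 / m) * ENNReal.ofReal (exp (-(1 / m + s) * y))) y := by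
    intro y
    by_cases hy : 0 ≤ y
    · rw [indicator_of_mem (mem_Ici.2 hy), Pi.mul_apply, if_pos hy,
        ← ENNReal.ofReal_mul (by positivity), ← ENNReal.ofReal_mul (by positivity), mul_assoc,
        ← exp_add]
      congr 3
      ring
    · simp [hy]
  rw [lintegral_congr hind, lintegral_indicator measurableSet_Ici,
    lintegral_const_mul _ (by fun_prop), lintegral_ofReal_exp_mul_Ici hrate,
    ← ENNReal.ofReal_mul (by positivity), mul_zero, exp_zero]
  congr 1
  field_simp

/-- `p.1` is the gain of the hop's own link and `p.2` that of the interfering link, so this is the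
event that the SINR `P p.1 / (Q p.2 + 1)` is at least `η`. -/
def hopSuccess (η P Q : ℝ) : Set (ℝ × ℝ) := {p | η * (Q * p.2 + 1) ≤ P * p.1}

lemma measurableSet_hopSuccess (η P Q : ℝ) : MeasurableSet (hopSuccess η P Q) :=
  measurableSet_le (by fun_prop) (by fun_prop)

lemma expLaw_prod_hopSuccess {a b P Q η : ℝ} (ha : 0 < a) (hb : 0 < b) (hP : 0 < P)
    (hQ : 0 ≤ Q) (hη : 0 ≤ η) :
    (expLaw a).prod (expLaw b) (hopSuccess η P Q)
      = ENNReal.ofReal (P * a * exp (-(η / (P * a))) / (P * a + Q * b * η)) := by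
  rw [Measure.prod_apply_symm (measurableSet_hopSuccess η P Q)]
  have hsection : ∀ᵐ y ∂expLaw b,
      expLaw a ((fun x => (x, y)) ⁻¹' hopSuccess η P Q)
        = ENNReal.ofReal (exp (-(η / (P * a))))
          * ENNReal.ofReal (exp (-(η * Q / (P * a) * y))) := by
    filter_upwards [ae_nonneg_of_map_eq_expLaw measurable_id Measure.map_id] with y hy
    have hIci : (fun x => (x, y)) ⁻¹' hopSuccess η P Q = Ici (η * (Q * y + 1) / P) := by
      ext x
      simp [hopSuccess, div_le_iff₀' hP]
    rw [hIci, expLaw_Ici ha (by positivity), ← ENNReal.ofReal_mul (by positivity), ← exp_add]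
    congr 2
    field_simp
    ring
  rw [lintegral_congr_ae hsection, lintegral_const_mul _ (by fun_prop),
    lintegral_exp_neg_mul_expLaw hb (by positivity), ← ENNReal.ofReal_mul (by positivity)]
  congr 1
  field_simp

lemma measure_preimage_hopSuccess {Ω : Type*} [MeasurableSpace Ω] {μ : Measure Ω}
    [IsFiniteMeasure μ] {X Y : Ω → ℝ} {a b P Q η : ℝ} (hX : Measurable X) (hY : Measurable Y)
    (hXY : IndepFun X Y μ) (hlawX : μ.map X = expLaw a) (hlawY : μ.map Y = expLaw b)
    (ha : 0 < a) (hb : 0 < b) (hP : 0 < P) (hQ : 0 ≤ Q) (hη : 0 ≤ η) :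
    μ ((fun ω => (X ω, Y ω)) ⁻¹' hopSuccess η P Q)
      = ENNReal.ofReal (P * a * exp (-(η / (P * a))) / (P * a + Q * b * η)) := by
  have hmap : μ.map (fun ω => (X ω, Y ω)) = (expLaw a).prod (expLaw b) := by
    rw [← hlawX, ← hlawY]
    exact (indepFun_iff_map_prod_eq_prod_map_map hX.aemeasurable hY.aemeasurable).1 hXY
  rw [← Measure.map_apply (hX.prodMk hY) (measurableSet_hopSuccess η P Q), hmap,
    expLaw_prod_hopSuccess ha hb hP hQ hη]

lemma not_outage_iff {r x y P Q : ℝ} (hx : 0 ≤ P * x) (hy : 0 ≤ Q * y) :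
    ¬ (P * x + Q * y + 1) ^ 2 < (2 : ℝ) ^ (2 * r) * (Q * y + 1) ^ 2
      ↔ ((2 : ℝ) ^ r - 1) * (Q * y + 1) ≤ P * x := by
  have hsq : (2 : ℝ) ^ (2 * r) = ((2 : ℝ) ^ r) ^ 2 := by
    rw [← rpow_natCast, ← rpow_mul zero_le_two, mul_comm]
    norm_num
  rw [not_lt, hsq, ← mul_pow,
    pow_le_pow_iff_left₀ (by positivity) (by positivity) two_ne_zero]
  constructor <;> intro h <;> linarith

lemma compl_outage_ae_eq_preimage_hopSuccess {Ω : Type*} [MeasurableSpace Ω] {μ : Measure Ω}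
    {X Y : Ω → ℝ} {a b : ℝ} (hX : Measurable X) (hY : Measurable Y)
    (hlawX : μ.map X = expLaw a) (hlawY : μ.map Y = expLaw b) {P Q r : ℝ} (hP : 0 ≤ P)
    (hQ : 0 ≤ Q) :
    ({ω | (P * X ω + Q * Y ω + 1) ^ 2 < (2 : ℝ) ^ (2 * r) * (Q * Y ω + 1) ^ 2}ᶜ : Set Ω)
      =ᵐ[μ] (fun ω => (X ω, Y ω)) ⁻¹' hopSuccess ((2 : ℝ) ^ r - 1) P Q := by
  filter_upwards [ae_nonneg_of_map_eq_expLaw hX hlawX, ae_nonneg_of_map_eq_expLaw hY hlawY]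
    with ω hXω hYω
  exact propext (not_outage_iff (by positivity) (by positivity))

theorem stmt_9
    {Ω : Type*} [MeasurableSpace Ω] (μ : Measure Ω) [IsProbabilityMeasure μ]
    (g_sr g_rr g_rd g_sd : Ω → ℝ)
    (hg_sr : Measurable g_sr) (hg_rr : Measurable g_rr)
    (hg_rd : Measurable g_rd) (hg_sd : Measurable g_sd)
    (hindep : iIndepFun (m := fun _ : Fin 4 => Real.measurableSpace)
      ![g_sr, g_rr, g_rd, g_sd] μ)
    (π_sr π_rr π_rd π_sd : ℝ)
    (hπ_sr : 0 < π_sr) (hπ_rr : 0 < π_rr) (hπ_rd : 0 < π_rd) (hπ_sd : 0 < π_sd)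
    (hlaw_sr : μ.map g_sr = expLaw π_sr)
    (hlaw_rr : μ.map g_rr = expLaw π_rr)
    (hlaw_rd : μ.map g_rd = expLaw π_rd)
    (hlaw_sd : μ.map g_sd = expLaw π_sd)
    (P_s P_r : ℝ) (hP_s : 0 < P_s) (hP_r : 0 < P_r)
    (r : ℝ) (hr : 0 < r)
    (η : ℝ) (hη : η = (2 : ℝ) ^ r - 1) :
    (μ ({ω | (P_s * g_sr ω + P_r * g_rr ω + 1) ^ 2
          < (2 : ℝ) ^ (2 * r) * (P_r * g_rr ω + 1) ^ 2} ∪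
        {ω | (P_r * g_rd ω + P_s * g_sd ω + 1) ^ 2
          < (2 : ℝ) ^ (2 * r) * (P_s * g_sd ω + 1) ^ 2})).toReal
      = 1 - P_s * P_r * π_sr * π_rd *
          Real.exp (-(η * (1 / (P_s * π_sr) + 1 / (P_r * π_rd)))) /
          ((P_s * π_sr + P_r * π_rr * η) * (P_r * π_rd + P_s * π_sd * η)) := by
  have hη0 : 0 ≤ η := by rw [hη, sub_nonneg]; exact one_le_rpow one_le_two hr.le
  have hmeas : ∀ i, Measurable (![g_sr, g_rr, g_rd, g_sd] i) := by
    intro i; fin_cases i <;> assumption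
  have hhops : IndepFun (fun ω => (g_sr ω, g_rr ω)) (fun ω => (g_rd ω, g_sd ω)) μ := by
    simpa using hindep.indepFun_prodMk_prodMk hmeas 0 1 2 3 (by decide) (by decide) (by decide)
      (by decide)
  have h_sr_rr : IndepFun g_sr g_rr μ := by
    simpa using hindep.indepFun (i := 0) (j := 1) (by decide)
  have h_rd_sd : IndepFun g_rd g_sd μ := by
    simpa using hindep.indepFun (i := 2) (j := 3) (by decide)
  have hsuccess := (compl_outage_ae_eq_preimage_hopSuccess (r := r) hg_sr hg_rr hlaw_sr hlaw_rr
    hP_s.le hP_r.le).inter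
    (compl_outage_ae_eq_preimage_hopSuccess (r := r) hg_rd hg_sd hlaw_rd hlaw_sd hP_r.le hP_s.le)
  rw [← hη] at hsuccess
  have houtage : MeasurableSet ({ω | (P_s * g_sr ω + P_r * g_rr ω + 1) ^ 2
      < (2 : ℝ) ^ (2 * r) * (P_r * g_rr ω + 1) ^ 2} ∪ {ω | (P_r * g_rd ω + P_s * g_sd ω + 1) ^ 2
      < (2 : ℝ) ^ (2 * r) * (P_s * g_sd ω + 1) ^ 2}) :=
    (measurableSet_lt (by fun_prop) (by fun_prop)).union
      (measurableSet_lt (by fun_prop) (by fun_prop))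
  rw [← Measure.real_def, ← compl_compl (_ ∪ _), probReal_compl_eq_one_sub houtage.compl,
    Measure.real_def, compl_union, measure_congr hsuccess,
    hhops.measure_inter_preimage_eq_mul _ _ (measurableSet_hopSuccess _ _ _)
      (measurableSet_hopSuccess _ _ _),
    measure_preimage_hopSuccess hg_sr hg_rr h_sr_rr hlaw_sr hlaw_rr hπ_sr hπ_rr hP_s hP_r.le hη0,
    measure_preimage_hopSuccess hg_rd hg_sd h_rd_sd hlaw_rd hlaw_sd hπ_rd hπ_sd hP_r hP_s.le hη0,
    ← ENNReal.ofReal_mul (by positivity), ENNReal.toReal_ofReal (by positivity)]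
  rw [mul_add, neg_add, exp_add, mul_one_div, mul_one_div, div_mul_div_comm]
  ring
end

section
/- Fix P_s, P_r, π_sr, π_rr, π_rd, π_sd > 0, r > 0, set γ = 2^{2r} − 1 and α = P_r·π_rr/(P_r·π_rr + 1). Then the left limit as C → 1⁻ of the function C ↦ 1 − exp( −( Ψ_γ(C)/(P_r·π_rd·(1 − C²)) + ((P_r·π_rr + 1)/(P_s·π_sr))·Ψ_γ(α·C) ) ) / ( P_s·π_sd·Ψ_γ(C)/(P_r·π_rd·(1 − C²)) + 1 ), defined for C ∈ [0,1), equals 1 − 2·P_r·π_rd · exp( −( γ/(2·P_r·π_rd) + ((P_r·π_rr + 1)/(P_s·π_sr))·Ψ_γ(α) ) ) / ( 2·P_r·π_rd + γ·P_s·π_sd ). -/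
open Real Filter Topology

/-!
Rationalising, `Ψ_γ(C) = γ(1 - C²) / (√(1 + γ(1 - C²)) + 1)`, so the indeterminate quotient
`Ψ_γ(C) / (1 - C²)` equals `γ / (√(1 + γ(1 - C²)) + 1)`, which is continuous at `C = 1` with
value `γ / 2`. Every other ingredient of the expression is continuous at `C = 1`, and the
denominator stays away from `0` because `γ = 2^{2r} - 1 ≥ 0`.
-/

theorem continuous_Psi (γ : ℝ) : Continuous (Psi γ) := by
  unfold Psi
  fun_prop

theorem Psi_eq_div (γ x : ℝ) (h : 0 ≤ 1 + γ * (1 - x ^ 2)) :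
    Psi γ x = γ * (1 - x ^ 2) / (√(1 + γ * (1 - x ^ 2)) + 1) := by
  rw [Psi, eq_div_iff (by positivity)]
  linear_combination Real.sq_sqrt h

theorem tendsto_Psi_div_one_sub_sq_nhdsLT {γ : ℝ} (hγ : 0 ≤ γ) :
    Tendsto (fun x => Psi γ x / (1 - x ^ 2)) (𝓝[<] 1) (𝓝 (γ / 2)) := by
  have hcont : ContinuousAt (fun x : ℝ => γ / (√(1 + γ * (1 - x ^ 2)) + 1)) 1 := by
    fun_prop (disch := positivity)
  have hlim : Tendsto (fun x : ℝ => γ / (√(1 + γ * (1 - x ^ 2)) + 1)) (𝓝[<] 1) (𝓝 (γ / 2)) := by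
    simpa [one_add_one_eq_two] using hcont.tendsto.mono_left nhdsWithin_le_nhds
  refine hlim.congr' ?_
  filter_upwards [Ioo_mem_nhdsLT (show (-1 : ℝ) < 1 by norm_num)] with x ⟨hx₁, hx₂⟩
  have hx : 0 < 1 - x ^ 2 := by nlinarith
  rw [Psi_eq_div γ x (by positivity), mul_div_right_comm, mul_div_cancel_right₀ _ hx.ne']

theorem stmt_11_general
    (P_s P_r π_sr π_rr π_rd π_sd : ℝ)
    (hP_s : 0 < P_s) (hP_r : 0 < P_r)
    (hπ_rd : 0 < π_rd) (hπ_sd : 0 < π_sd)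
    (r : ℝ) (hr : 0 < r)
    (γ α : ℝ) (hγ : γ = (2 : ℝ) ^ (2 * r) - 1) :
    Tendsto
      (fun C : ℝ =>
        1 - Real.exp (-(Psi γ C / (P_r * π_rd * (1 - C ^ 2)) +
              ((P_r * π_rr + 1) / (P_s * π_sr)) * Psi γ (α * C))) /
            (P_s * π_sd * Psi γ C / (P_r * π_rd * (1 - C ^ 2)) + 1))
      (nhdsWithin 1 (Set.Ico (0 : ℝ) 1))
      (nhds (1 - 2 * P_r * π_rd *
          Real.exp (-(γ / (2 * P_r * π_rd) +
            ((P_r * π_rr + 1) / (P_s * π_sr)) * Psi γ α)) /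
          (2 * P_r * π_rd + γ * P_s * π_sd))) := by
  have hγ₀ : 0 ≤ γ := hγ ▸ sub_nonneg.2 (one_le_rpow one_le_two (by positivity))
  set k := (P_r * π_rr + 1) / (P_s * π_sr)
  have hq : Tendsto (fun C => Psi γ C / (1 - C ^ 2)) (𝓝[Set.Ico 0 1] 1) (𝓝 (γ / 2)) :=
    (tendsto_Psi_div_one_sub_sq_nhdsLT hγ₀).mono_left (nhdsWithin_mono _ Set.Ico_subset_Iio_self)
  have hψ : Tendsto (fun C => Psi γ (α * C)) (𝓝[Set.Ico 0 1] 1) (𝓝 (Psi γ α)) := by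
    refine (((continuous_Psi γ).comp (continuous_const_mul α)).tendsto' 1 _ ?_).mono_left
      nhdsWithin_le_nhds
    simp
  have hden : P_s * π_sd * (γ / 2) / (P_r * π_rd) + 1 ≠ 0 := by positivity
  have hlim := tendsto_const_nhds (x := (1 : ℝ)).sub
    (((hq.div_const (P_r * π_rd)).add (hψ.const_mul k)).neg.rexp.div
      (((hq.const_mul (P_s * π_sd)).div_const (P_r * π_rd)).add_const 1) hden)
  convert hlim using 2 with C
  · rw [Pi.div_apply, div_div, ← mul_div_assoc, div_div, mul_comm (1 - C ^ 2)]
  · field_simp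
    ring

theorem stmt_11
    (P_s P_r π_sr π_rr π_rd π_sd : ℝ)
    (hP_s : 0 < P_s) (hP_r : 0 < P_r) (hπ_sr : 0 < π_sr) (hπ_rr : 0 < π_rr)
    (hπ_rd : 0 < π_rd) (hπ_sd : 0 < π_sd)
    (r : ℝ) (hr : 0 < r)
    (γ α : ℝ) (hγ : γ = (2 : ℝ) ^ (2 * r) - 1)
    (hα : α = P_r * π_rr / (P_r * π_rr + 1)) :
    Tendsto
      (fun C : ℝ =>
        1 - Real.exp (-(Psi γ C / (P_r * π_rd * (1 - C ^ 2)) +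
              ((P_r * π_rr + 1) / (P_s * π_sr)) * Psi γ (α * C))) /
            (P_s * π_sd * Psi γ C / (P_r * π_rd * (1 - C ^ 2)) + 1))
      (nhdsWithin 1 (Set.Ico (0 : ℝ) 1))
      (nhds (1 - 2 * P_r * π_rd *
          Real.exp (-(γ / (2 * P_r * π_rd) +
            ((P_r * π_rr + 1) / (P_s * π_sr)) * Psi γ α)) /
          (2 * P_r * π_rd + γ * P_s * π_sd))) :=
  stmt_11_general P_s P_r π_sr π_rr π_rd π_sd hP_s hP_r hπ_rd hπ_sd r hr γ α hγ
end

section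
/- Fix P_s, P_r, π_sr, π_rd, π_sd > 0 and γ > 0. Then, as π_rr → ∞, the maximally-improper upper-bound expression π_rr ↦ 1 − 2·P_r·π_rd · exp( −( γ/(2·P_r·π_rd) + ((P_r·π_rr + 1)/(P_s·π_sr)) · Ψ_γ( P_r·π_rr/(P_r·π_rr + 1) ) ) ) / ( 2·P_r·π_rd + γ·P_s·π_sd ) converges to the constant K = 1 − 2·P_r·π_rd · exp( −( γ/(2·P_r·π_rd) + γ/(P_s·π_sr) ) ) / ( 2·P_r·π_rd + γ·P_s·π_sd ). -/
open Real Filter Topology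

lemma sqrt_one_add_sub_one {u : ℝ} (hu : 0 ≤ 1 + u) : √(1 + u) - 1 = u / (√(1 + u) + 1) := by
  have hsq := Real.sq_sqrt hu
  rw [eq_div_iff (by positivity)]
  linear_combination hsq

/-- Rationalising, `s Ψ_γ(1 - 1/s) = γ (2 - 1/s) / (√(1 + γ (2 - 1/s) / s) + 1)`. -/
theorem tendsto_mul_Psi_sub_one_div (γ : ℝ) :
    Tendsto (fun s : ℝ => s * Psi γ ((s - 1) / s)) atTop (𝓝 γ) := by
  set u : ℝ → ℝ := fun s => γ * (1 - ((s - 1) / s) ^ 2) with hu_def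
  have hsu : Tendsto (fun s => s * u s) atTop (𝓝 (γ * 2)) := by
    have h := (tendsto_const_nhds (x := (2 : ℝ)).sub tendsto_inv_atTop_zero).const_mul γ
    rw [sub_zero] at h
    refine h.congr' ?_
    filter_upwards [eventually_ne_atTop 0] with s hs
    simp only [hu_def]
    field_simp
    ring
  have hu : Tendsto u atTop (𝓝 0) := by
    have h := hsu.mul tendsto_inv_atTop_zero
    rw [mul_zero] at h
    refine h.congr' ?_
    filter_upwards [eventually_ne_atTop 0] with s hs
    field_simp
  have hden : Tendsto (fun s => √(1 + u s) + 1) atTop (𝓝 2) := by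
    have h := ((continuous_sqrt.tendsto _).comp (hu.const_add 1)).add_const 1
    norm_num at h
    exact h
  have hlim := hsu.div hden two_ne_zero
  rw [mul_div_cancel_right₀ γ two_ne_zero] at hlim
  refine hlim.congr' ?_
  filter_upwards [hu.eventually (Ioi_mem_nhds (by norm_num : (-1 : ℝ) < 0))] with s hs
  change s * u s / (√(1 + u s) + 1) = s * (√(1 + u s) - 1)
  rw [sqrt_one_add_sub_one (by linarith), mul_div_assoc]

theorem stmt_13_general
    (P_s P_r π_sr π_rd π_sd γ : ℝ)
    (hP_r : 0 < P_r) :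
    Tendsto
      (fun π_rr : ℝ =>
        1 - 2 * P_r * π_rd *
          Real.exp (-(γ / (2 * P_r * π_rd) +
            ((P_r * π_rr + 1) / (P_s * π_sr)) *
              Psi γ (P_r * π_rr / (P_r * π_rr + 1)))) /
          (2 * P_r * π_rd + γ * P_s * π_sd))
      atTop
      (nhds (1 - 2 * P_r * π_rd *
        Real.exp (-(γ / (2 * P_r * π_rd) + γ / (P_s * π_sr))) /
        (2 * P_r * π_rd + γ * P_s * π_sd))) := by
  have hs : Tendsto (fun π_rr => P_r * π_rr + 1) atTop atTop :=
    tendsto_atTop_add_const_right _ 1 (tendsto_id.const_mul_atTop hP_r)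
  have hΨ : Tendsto (fun π_rr => (P_r * π_rr + 1) * Psi γ (P_r * π_rr / (P_r * π_rr + 1)))
      atTop (𝓝 γ) := by
    simpa only [Function.comp_def, add_sub_cancel_right] using
      (tendsto_mul_Psi_sub_one_div γ).comp hs
  have hg : Continuous fun y => 1 - 2 * P_r * π_rd *
      Real.exp (-(γ / (2 * P_r * π_rd) + y / (P_s * π_sr))) / (2 * P_r * π_rd + γ * P_s * π_sd) := by
    fun_prop
  refine ((hg.tendsto γ).comp hΨ).congr fun π_rr => ?_
  simp only [Function.comp_apply, div_mul_eq_mul_div]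

theorem stmt_13
    (P_s P_r π_sr π_rd π_sd γ : ℝ)
    (hP_s : 0 < P_s) (hP_r : 0 < P_r) (hπ_sr : 0 < π_sr)
    (hπ_rd : 0 < π_rd) (hπ_sd : 0 < π_sd) (hγ : 0 < γ) :
    Tendsto
      (fun π_rr : ℝ =>
        1 - 2 * P_r * π_rd *
          Real.exp (-(γ / (2 * P_r * π_rd) +
            ((P_r * π_rr + 1) / (P_s * π_sr)) *
              Psi γ (P_r * π_rr / (P_r * π_rr + 1)))) /
          (2 * P_r * π_rd + γ * P_s * π_sd))
      atTop
      (nhds (1 - 2 * P_r * π_rd *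
        Real.exp (-(γ / (2 * P_r * π_rd) + γ / (P_s * π_sr))) /
        (2 * P_r * π_rd + γ * P_s * π_sd))) :=
  stmt_13_general P_s P_r π_sr π_rd π_sd γ hP_r
end

section
/- Fix a, b, c > 0, γ > 0 and α ∈ (0,1). Then the function f(x) = 1 − exp( −( a·Ψ_γ(x)/(1 − x²) + b·Ψ_γ(α·x) ) ) / ( c·Ψ_γ(x)/(1 − x²) + 1 ) is quasiconvex on the interval [0,1); that is, for every real t the sublevel set { x ∈ [0,1) : f(x) ≤ t } is convex (equивalently, f is either monotone on [0,1) or unimodal with a unique interior minimum). -/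
open Real

/-!
In the variable `u = Ψ_γ(x) + 2 = 1 + √(1 + γ(1 - x²))`, which decreases on `[0,1)`, one has
`Ψ_γ(x)/(1 - x²) = γ/u` and `Ψ_γ(αx) = √((αu - α)² + (1 - α²)(1 + γ)) - 1`, so
`f = 1 - exp(b - G(u))` with `G = outageExponent a b c γ α` a sum of three functions convex on
`u > 0`. A convex function precomposed with a monotone map of an interval is quasiconvex, and
quasiconvexity survives the increasing map `y ↦ 1 - exp(b - y)`.
-/

open Set

theorem QuasiconvexOn.congr {𝕜 E β : Type*} [Semiring 𝕜] [PartialOrder 𝕜] [AddCommMonoid E]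
    [SMul 𝕜 E] [LE β] {s : Set E} {f g : E → β} (hf : QuasiconvexOn 𝕜 s f) (hfg : EqOn f g s) :
    QuasiconvexOn 𝕜 s g := by
  intro r
  convert hf r using 1
  ext x
  exact and_congr_right fun hx => by rw [hfg hx]

theorem QuasiconvexOn.comp_antitoneOn {𝕜 β : Type*} [Field 𝕜] [LinearOrder 𝕜]
    [IsStrictOrderedRing 𝕜] [LE β] {s t : Set 𝕜} {g : 𝕜 → β} {φ : 𝕜 → 𝕜}
    (hg : QuasiconvexOn 𝕜 t g) (hs : Convex 𝕜 s) (hφ : AntitoneOn φ s) (hst : MapsTo φ s t) :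
    QuasiconvexOn 𝕜 s (g ∘ φ) := by
  intro r
  obtain ⟨u, hu, hsu⟩ := (hg r).ordConnected.preimage_antitoneOn hφ
  have hsub : {x ∈ s | (g ∘ φ) x ≤ r} = s ∩ u := by
    rw [← hsu]
    ext x
    exact and_congr_right fun hx => (and_iff_right (hst hx)).symm
  have := hs.ordConnected
  exact hsub ▸ (this.inter hu).convex

theorem convexOn_sqrt_sq_add {β : ℝ} (hβ : 0 ≤ β) (m n : ℝ) :
    ConvexOn ℝ univ fun x : ℝ => √((m * x + n) ^ 2 + β) := by
  -- `√((m x + n)² + β)` is the modulus of the affine path `x ↦ (m x + n) + √β i` in `ℂ`.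
  let p : ℂ := n + √β * Complex.I
  let q : ℂ := (m + n : ℝ) + √β * Complex.I
  refine ((convexOn_norm convex_univ).comp_affineMap (AffineMap.lineMap p q)).congr fun x _ => ?_
  have hpath : x • (q - p) + p = ((m * x + n : ℝ) : ℂ) + √β * Complex.I := by
    simp only [p, q]
    push_cast
    rw [Complex.real_smul]
    ring
  simp only [Function.comp_apply, AffineMap.lineMap_apply_module', hpath, Complex.norm_add_mul_I,
    sq_sqrt hβ]

theorem convexOn_log_div_add_one {k : ℝ} (hk : 0 ≤ k) :
    ConvexOn ℝ (Ioi 0) fun u => log (k / u + 1) := by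
  have hderiv : ∀ u ∈ Ioi (0 : ℝ),
      HasDerivAt (fun u => log (k / u + 1)) (-k / (u * (u + k))) u := by
    intro u (hu : 0 < u)
    have h := (((hasDerivAt_inv hu.ne').const_mul k).add_const 1).log (by positivity)
    convert h using 1
    · simp only [div_eq_mul_inv]
    · field_simp
      ring
  have hdiff : DifferentiableOn ℝ (fun u => log (k / u + 1)) (Ioi 0) :=
    fun u hu => (hderiv u hu).differentiableAt.differentiableWithinAt
  refine MonotoneOn.convexOn_of_deriv (convex_Ioi 0) hdiff.continuousOn
    (by rwa [interior_Ioi]) ?_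
  rw [interior_Ioi]
  intro u (hu : 0 < u) v (hv : 0 < v) huv
  rw [(hderiv u hu).deriv, (hderiv v hv).deriv, neg_div, neg_div, neg_le_neg_iff]
  gcongr

section Psi

variable {γ x : ℝ}

theorem psi_add_two_pos : 0 < Psi γ x + 2 := by
  unfold Psi
  linarith [sqrt_nonneg (1 + γ * (1 - x ^ 2))]

theorem psi_mul_psi_add_two (h : 0 ≤ 1 + γ * (1 - x ^ 2)) :
    Psi γ x * (Psi γ x + 2) = γ * (1 - x ^ 2) := by
  unfold Psi
  linear_combination sq_sqrt h

theorem psi_div_one_sub_sq (hγ : 0 ≤ γ) (hx : x ^ 2 < 1) :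
    Psi γ x / (1 - x ^ 2) = γ / (Psi γ x + 2) := by
  have h := psi_mul_psi_add_two (γ := γ) (x := x) (by nlinarith)
  rw [div_eq_div_iff (by linarith) psi_add_two_pos.ne']
  linear_combination h

theorem psi_mul_eq (α : ℝ) (h : 0 ≤ 1 + γ * (1 - x ^ 2)) :
    Psi γ (α * x) = √((α * (Psi γ x + 2) - α) ^ 2 + (1 - α ^ 2) * (1 + γ)) - 1 := by
  unfold Psi
  congr 2
  linear_combination -α ^ 2 * sq_sqrt h

theorem antitoneOn_psi (hγ : 0 ≤ γ) : AntitoneOn (Psi γ) (Ici 0) := by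
  intro x (hx : 0 ≤ x) y _ hxy
  unfold Psi
  gcongr

end Psi

noncomputable def outageExponent (a b c γ α u : ℝ) : ℝ :=
  a * γ / u + b * √((α * u - α) ^ 2 + (1 - α ^ 2) * (1 + γ)) + log (c * γ / u + 1)

theorem convexOn_outageExponent {a b c γ α : ℝ} (ha : 0 ≤ a) (hb : 0 ≤ b) (hc : 0 ≤ c)
    (hγ : 0 ≤ γ) (hα : α ^ 2 ≤ 1) : ConvexOn ℝ (Ioi 0) (outageExponent a b c γ α) := by
  have hinv : ConvexOn ℝ (Ioi 0) fun u : ℝ => a * γ / u :=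
    ((convexOn_zpow (-1)).smul (mul_nonneg ha hγ)).congr fun u _ => by simp [div_eq_mul_inv]
  have hβ : 0 ≤ (1 - α ^ 2) * (1 + γ) := by nlinarith
  have hsqrt := ((convexOn_sqrt_sq_add hβ α (-α)).subset (subset_univ _) (convex_Ioi 0)).smul hb
  have hlog := convexOn_log_div_add_one (mul_nonneg hc hγ)
  refine ((hinv.add hsqrt).add hlog).congr fun u _ => ?_
  simp only [outageExponent, Pi.add_apply, smul_eq_mul, sub_eq_add_neg]

theorem outage_eq_one_sub_exp_outageExponent (a b c α : ℝ) {γ x : ℝ} (hc : 0 ≤ c)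
    (hγ : 0 ≤ γ) (hx : x ^ 2 < 1) :
    1 - exp (-(a * Psi γ x / (1 - x ^ 2) + b * Psi γ (α * x))) / (c * Psi γ x / (1 - x ^ 2) + 1)
      = 1 - exp (b - outageExponent a b c γ α (Psi γ x + 2)) := by
  have hu : 0 < Psi γ x + 2 := psi_add_two_pos
  have hdiv (k : ℝ) : k * Psi γ x / (1 - x ^ 2) = k * γ / (Psi γ x + 2) := by
    rw [mul_div_assoc, psi_div_one_sub_sq hγ hx, mul_div_assoc]
  rw [hdiv, hdiv, psi_mul_eq α (by nlinarith), outageExponent]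
  set u := Psi γ x + 2
  set S := √((α * u - α) ^ 2 + (1 - α ^ 2) * (1 + γ))
  have hD : 0 < c * γ / u + 1 := by positivity
  rw [show b - (a * γ / u + b * S + log (c * γ / u + 1))
    = -(a * γ / u + b * (S - 1)) - log (c * γ / u + 1) by ring, exp_sub, exp_log hD]

theorem stmt_16
    (a b c γ α : ℝ) (ha : 0 < a) (hb : 0 < b) (hc : 0 < c) (hγ : 0 < γ)
    (hα : α ∈ Set.Ioo (0 : ℝ) 1) :
    QuasiconvexOn ℝ (Set.Ico (0 : ℝ) 1)
      (fun x => 1 - Real.exp (-(a * Psi γ x / (1 - x ^ 2) + b * Psi γ (α * x))) /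
        (c * Psi γ x / (1 - x ^ 2) + 1)) := by
  have hG : ConvexOn ℝ (Ioi 0) (outageExponent a b c γ α) :=
    convexOn_outageExponent ha.le hb.le hc.le hγ.le (by nlinarith [hα.1, hα.2])
  have hf : QuasiconvexOn ℝ (Ico 0 1)
      ((fun y => 1 - exp (b - y)) ∘ outageExponent a b c γ α ∘ (Psi γ · + 2)) :=
    (hG.quasiconvexOn.comp_antitoneOn (convex_Ico 0 1)
      (((antitoneOn_psi hγ.le).mono Ico_subset_Ici_self).add_const 2)
      fun _ _ => psi_add_two_pos).monotone_comp fun y z hyz => by gcongr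
  exact hf.congr fun x ⟨hx0, hx1⟩ =>
    (outage_eq_one_sub_exp_outageExponent a b c α hc.le hγ.le (by nlinarith)).symm
end
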